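/- The number of Latin cubes S of order 3 (functions S : Fin 3 → Fin 3 → Fin 3 → Fin 3 such that fixing any two arguments yields a bijection in the remaining argument) that satisfy the virtual axioms (vII) S a (S a b c) c = b, (vIII.i) S a b (S b c d) = S a (S a b c) (S (S a b c) c d), and (vIII.ii) S (S a b c) c d = S (S a b (S b c d)) (S b c d) d for all a, b, c, d ∈ Fin 3, is exactly 6. -/
import Mathlib

set_option maxRecDepth 10000
set_option maxHeartbeats 2000000
set_option synthInstance.maxHeartbeats 2000000
set_option synthInstance.maxSize 5000

def IsLatinCube {n : ℕ} (S : Fin n → Fin n → Fin n → Fin n) : Prop :=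
  (∀ a b, Function.Bijective (fun c => S a b c)) ∧
  (∀ a c, Function.Bijective (fun b => S a b c)) ∧
  (∀ b c, Function.Bijective (fun a => S a b c))

def VirtualAxioms {n : ℕ} (S : Fin n → Fin n → Fin n → Fin n) : Prop :=
  ∀ a b c d : Fin n,
    S a (S a b c) c = b ∧
    S a b (S b c d) = S a (S a b c) (S (S a b c) c d) ∧
    S (S a b c) c d = S (S a b (S b c d)) (S b c d) d

theorem slice2 : ∀ f g : Fin 3 → Fin 3, (∀ b, f (f b) = b) → (∀ b, g (g b) = b) →
    (∀ b, f b ≠ g b) → ∀ b, f b = f 0 - b := by decide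

def TM (x00 x01 x02 x10 x11 x12 x20 x21 x22 : Fin 3) : Fin 3 → Fin 3 → Fin 3 → Fin 3 :=
  fun a b c => ![![x00,x01,x02],![x10,x11,x12],![x20,x21,x22]] a c - b

theorem tclass9 : ∀ x00 x01 x02 x10 x11 x12 x20 x21 x22 : Fin 3,
    x00 ≠ x01 → x00 ≠ x02 → x01 ≠ x02 →
    x10 ≠ x11 → x10 ≠ x12 → x11 ≠ x12 →
    x20 ≠ x21 → x20 ≠ x22 → x21 ≠ x22 →
    (∀ a b c d, TM x00 x01 x02 x10 x11 x12 x20 x21 x22 a b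
        (TM x00 x01 x02 x10 x11 x12 x20 x21 x22 b c d) =
      TM x00 x01 x02 x10 x11 x12 x20 x21 x22 a
        (TM x00 x01 x02 x10 x11 x12 x20 x21 x22 a b c)
        (TM x00 x01 x02 x10 x11 x12 x20 x21 x22
          (TM x00 x01 x02 x10 x11 x12 x20 x21 x22 a b c) c d)) →
    ((x00=0∧x01=1∧x02=2∧x10=1∧x11=2∧x12=0∧x20=2∧x21=0∧x22=1) ∨
     (x00=1∧x01=2∧x02=0∧x10=2∧x11=0∧x12=1∧x20=0∧x21=1∧x22=2) ∨
     (x00=2∧x01=0∧x02=1∧x10=0∧x11=1∧x12=2∧x20=1∧x21=2∧x22=0) ∨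
     (x00=0∧x01=2∧x02=1∧x10=2∧x11=1∧x12=0∧x20=1∧x21=0∧x22=2) ∨
     (x00=1∧x01=0∧x02=2∧x10=0∧x11=2∧x12=1∧x20=2∧x21=1∧x22=0) ∨
     (x00=2∧x01=1∧x02=0∧x10=1∧x11=0∧x12=2∧x20=0∧x21=2∧x22=1)) := by
  decide

def solList : List (Fin 3 → Fin 3 → Fin 3 → Fin 3) :=
  [fun a b c => TM 0 1 2 1 2 0 2 0 1 a b c,
   fun a b c => TM 1 2 0 2 0 1 0 1 2 a b c,
   fun a b c => TM 2 0 1 0 1 2 1 2 0 a b c,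
   fun a b c => TM 0 2 1 2 1 0 1 0 2 a b c,
   fun a b c => TM 1 0 2 0 2 1 2 1 0 a b c,
   fun a b c => TM 2 1 0 1 0 2 0 2 1 a b c]

def sols : Finset (Fin 3 → Fin 3 → Fin 3 → Fin 3) := solList.toFinset

lemma key (S : Fin 3 → Fin 3 → Fin 3 → Fin 3) :
    (IsLatinCube S ∧ VirtualAxioms S) ↔ S ∈ sols := by
  constructor
  · rintro ⟨hL, hV⟩
    -- slices in b are involutions
    have hinv : ∀ a c b, S a (S a b c) c = b := fun a c b => (hV a b c 0).1
    have hcne : ∀ c : Fin 3, c + 1 ≠ c := by decide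
    -- each b-slice is negation
    have hS : ∀ a b c, S a b c = S a 0 c - b := by
      intro a b c
      exact slice2 (fun b => S a b c) (fun b => S a b (c+1)) (hinv a c) (hinv a (c+1))
        (fun b h => hcne c ((hL.1 a b).injective h).symm) b
    -- the matrix of values S a 0 c equals S a 0 c
    have hM : ∀ a c, (![![S 0 0 0, S 0 0 1, S 0 0 2],
        ![S 1 0 0, S 1 0 1, S 1 0 2],
        ![S 2 0 0, S 2 0 1, S 2 0 2]] : Fin 3 → Fin 3 → Fin 3) a c = S a 0 c := by
      intro a c; fin_cases a <;> fin_cases c <;> rfl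
    have hTM : ∀ a b c, TM (S 0 0 0) (S 0 0 1) (S 0 0 2) (S 1 0 0) (S 1 0 1) (S 1 0 2)
        (S 2 0 0) (S 2 0 1) (S 2 0 2) a b c = S a b c := by
      intro a b c
      show (![![S 0 0 0, S 0 0 1, S 0 0 2], ![S 1 0 0, S 1 0 1, S 1 0 2],
        ![S 2 0 0, S 2 0 1, S 2 0 2]] : Fin 3 → Fin 3 → Fin 3) a c - b = S a b c
      rw [hM, ← hS]
    have hneq : ∀ c c' : Fin 3, c ≠ c' → S 0 0 c ≠ S 0 0 c' ∧ S 1 0 c ≠ S 1 0 c' ∧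
        S 2 0 c ≠ S 2 0 c' := by
      intro c c' h
      exact ⟨fun hh => h ((hL.1 0 0).injective hh), fun hh => h ((hL.1 1 0).injective hh),
        fun hh => h ((hL.1 2 0).injective hh)⟩
    have hE : ∀ a b c d, TM (S 0 0 0) (S 0 0 1) (S 0 0 2) (S 1 0 0) (S 1 0 1) (S 1 0 2)
        (S 2 0 0) (S 2 0 1) (S 2 0 2) a b
          (TM (S 0 0 0) (S 0 0 1) (S 0 0 2) (S 1 0 0) (S 1 0 1) (S 1 0 2)
            (S 2 0 0) (S 2 0 1) (S 2 0 2) b c d) =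
        TM (S 0 0 0) (S 0 0 1) (S 0 0 2) (S 1 0 0) (S 1 0 1) (S 1 0 2)
          (S 2 0 0) (S 2 0 1) (S 2 0 2) a
          (TM (S 0 0 0) (S 0 0 1) (S 0 0 2) (S 1 0 0) (S 1 0 1) (S 1 0 2)
            (S 2 0 0) (S 2 0 1) (S 2 0 2) a b c)
          (TM (S 0 0 0) (S 0 0 1) (S 0 0 2) (S 1 0 0) (S 1 0 1) (S 1 0 2)
            (S 2 0 0) (S 2 0 1) (S 2 0 2)
            (TM (S 0 0 0) (S 0 0 1) (S 0 0 2) (S 1 0 0) (S 1 0 1) (S 1 0 2)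
              (S 2 0 0) (S 2 0 1) (S 2 0 2) a b c) c d) := by
      intro a b c d
      simp only [hTM]
      exact (hV a b c d).2.1
    have h01 : (0:Fin 3) ≠ 1 := by decide
    have h02 : (0:Fin 3) ≠ 2 := by decide
    have h12 : (1:Fin 3) ≠ 2 := by decide
    have := tclass9 (S 0 0 0) (S 0 0 1) (S 0 0 2) (S 1 0 0) (S 1 0 1) (S 1 0 2)
      (S 2 0 0) (S 2 0 1) (S 2 0 2)
      (hneq 0 1 h01).1 (hneq 0 2 h02).1 (hneq 1 2 h12).1
      (hneq 0 1 h01).2.1 (hneq 0 2 h02).2.1 (hneq 1 2 h12).2.1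
      (hneq 0 1 h01).2.2 (hneq 0 2 h02).2.2 (hneq 1 2 h12).2.2 hE
    have hfun : ∀ x00 x01 x02 x10 x11 x12 x20 x21 x22 : Fin 3,
        S 0 0 0 = x00 → S 0 0 1 = x01 → S 0 0 2 = x02 →
        S 1 0 0 = x10 → S 1 0 1 = x11 → S 1 0 2 = x12 →
        S 2 0 0 = x20 → S 2 0 1 = x21 → S 2 0 2 = x22 →
        S = fun a b c => TM x00 x01 x02 x10 x11 x12 x20 x21 x22 a b c := by
      intro x00 x01 x02 x10 x11 x12 x20 x21 x22 e1 e2 e3 e4 e5 e6 e7 e8 e9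
      funext a b c
      rw [hS a b c]
      show _ = (![![x00,x01,x02],![x10,x11,x12],![x20,x21,x22]] : Fin 3 → Fin 3 → Fin 3) a c - b
      congr 1
      fin_cases a <;> fin_cases c <;> assumption
    simp only [sols, solList, List.mem_toFinset, List.mem_cons, List.not_mem_nil, or_false]
    rcases this with ⟨e1,e2,e3,e4,e5,e6,e7,e8,e9⟩ | ⟨e1,e2,e3,e4,e5,e6,e7,e8,e9⟩ |
      ⟨e1,e2,e3,e4,e5,e6,e7,e8,e9⟩ | ⟨e1,e2,e3,e4,e5,e6,e7,e8,e9⟩ |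
      ⟨e1,e2,e3,e4,e5,e6,e7,e8,e9⟩ | ⟨e1,e2,e3,e4,e5,e6,e7,e8,e9⟩
    · exact Or.inl (hfun _ _ _ _ _ _ _ _ _ e1 e2 e3 e4 e5 e6 e7 e8 e9)
    · exact Or.inr (Or.inl (hfun _ _ _ _ _ _ _ _ _ e1 e2 e3 e4 e5 e6 e7 e8 e9))
    · exact Or.inr (Or.inr (Or.inl (hfun _ _ _ _ _ _ _ _ _ e1 e2 e3 e4 e5 e6 e7 e8 e9)))
    · exact Or.inr (Or.inr (Or.inr (Or.inl (hfun _ _ _ _ _ _ _ _ _ e1 e2 e3 e4 e5 e6 e7 e8 e9))))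
    · exact Or.inr (Or.inr (Or.inr (Or.inr (Or.inl
        (hfun _ _ _ _ _ _ _ _ _ e1 e2 e3 e4 e5 e6 e7 e8 e9)))))
    · exact Or.inr (Or.inr (Or.inr (Or.inr (Or.inr
        (hfun _ _ _ _ _ _ _ _ _ e1 e2 e3 e4 e5 e6 e7 e8 e9)))))
  · intro h
    simp only [sols, solList, List.mem_toFinset, List.mem_cons, List.not_mem_nil, or_false] at h
    rcases h with h | h | h | h | h | h <;> subst h <;>
      exact ⟨by unfold IsLatinCube; decide, by unfold VirtualAxioms; decide⟩

theorem card_virtual_cubes_order_three :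
    Nat.card {S : Fin 3 → Fin 3 → Fin 3 → Fin 3 //
      IsLatinCube S ∧ VirtualAxioms S} = 6 := by
  rw [Nat.card_congr (Equiv.subtypeEquivRight key)]
  rw [Nat.card_eq_finsetCard]
  decide
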